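/- Let R be a complete DVR, G a flat affine group scheme over R, and suppose G satisfies: for every representation V on a finitely generated free R-module and every finite subset F ⊆ V, the set of subrepresentations of V containing F has a least element. Then G is prudent: for every such V, any v ∈ V whose reduction modulo π^{n+1}V is semi-invariant for all n is semi-invariant. -/

import Mathlib

/-!
Let `W₀` be the least subrepresentation containing `v`. Each `Wₙ = Rv + π^(n+1) V` is a
subrepresentation containing `v`, so `W₀ ⊆ ⋂ₙ Wₙ`, and Krull's intersection theorem in the
finitely generated module `V ⧸ Rv` over the Noetherian local ring `R` gives `⋂ₙ Wₙ = Rv`.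
Hence `W₀ = Rv`, i.e. `v` is semi-invariant.
-/

open TensorProduct

variable {R : Type} [CommRing R]

/-- `ρ : V → V ⊗ A` is a coaction (comodule structure): counit and coassociativity. -/
def IsCoaction {A V : Type} [CommRing A] [Bialgebra R A]
    [AddCommGroup V] [Module R V] (ρ : V →ₗ[R] V ⊗[R] A) : Prop :=
  (∀ v : V, (TensorProduct.rid R V)
      ((TensorProduct.map LinearMap.id (Coalgebra.counit (R := R) (A := A))) (ρ v)) = v) ∧
  (∀ v : V, (TensorProduct.assoc R V A A)
      ((TensorProduct.map ρ (LinearMap.id : A →ₗ[R] A)) (ρ v)) =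
    (TensorProduct.map (LinearMap.id : V →ₗ[R] V) (Coalgebra.comul (R := R) (A := A))) (ρ v))

/-- `v` is semi-invariant for the coaction `ρ`: the span of `v` is a subcomodule. -/
def IsSemiInvariant {A V : Type} [CommRing A] [Algebra R A]
    [AddCommGroup V] [Module R V] (ρ : V →ₗ[R] V ⊗[R] A) (v : V) : Prop :=
  ∀ x ∈ Submodule.span R {v},
    ρ x ∈ LinearMap.range
      (TensorProduct.map (Submodule.span R {v}).subtype (LinearMap.id : A →ₗ[R] A))

/-- The reduction of `v` modulo `π^(n+1) V` is semi-invariant: its span is a subcomodule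
of `V/π^(n+1)V`, expressed via preimages in `V` and `V ⊗ A`. -/
def IsSemiInvariantMod {A V : Type} [CommRing A] [Algebra R A]
    [AddCommGroup V] [Module R V] (π : R) (ρ : V →ₗ[R] V ⊗[R] A) (v : V) (n : ℕ) : Prop :=
  ∀ x ∈ Submodule.span R {v} ⊔
      LinearMap.range ((π ^ (n + 1)) • (LinearMap.id : V →ₗ[R] V)),
    ρ x ∈ LinearMap.range
        (TensorProduct.map (Submodule.span R {v}).subtype (LinearMap.id : A →ₗ[R] A)) ⊔
      LinearMap.range ((π ^ (n + 1)) • (LinearMap.id : V ⊗[R] A →ₗ[R] V ⊗[R] A))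

/-- A flat affine group scheme with Hopf algebra `A` over `R` is prudent if, in every
representation on a finitely generated free `R`-module, every vector whose reduction
modulo `π^(n+1)` is semi-invariant for all `n` is itself semi-invariant. -/
def Prudent (π : R) (A : Type) [CommRing A] [Bialgebra R A] : Prop :=
  ∀ (V : Type) [AddCommGroup V] [Module R V], Module.Finite R V → Module.Free R V →
    ∀ ρ : V →ₗ[R] V ⊗[R] A, IsCoaction ρ →
      ∀ v : V, (∀ n : ℕ, IsSemiInvariantMod π ρ v n) → IsSemiInvariant ρ v

/-- A submodule `W ⊆ V` is a subrepresentation (subcomodule) for the coaction `ρ`. -/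
def IsSubcomodule {A V : Type} [CommRing A] [Algebra R A]
    [AddCommGroup V] [Module R V] (ρ : V →ₗ[R] V ⊗[R] A) (W : Submodule R V) : Prop :=
  ∀ x ∈ W, ρ x ∈ LinearMap.range (TensorProduct.map W.subtype (LinearMap.id : A →ₗ[R] A))

open LinearMap in
theorem TensorProduct.range_map_subtype_mono {A V : Type} [AddCommGroup A] [Module R A]
    [AddCommGroup V] [Module R V] {W W' : Submodule R V} (h : W ≤ W') :
    range (map W.subtype (LinearMap.id : A →ₗ[R] A)) ≤
      range (map W'.subtype (LinearMap.id : A →ₗ[R] A)) := by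
  rw [← Submodule.subtype_comp_inclusion W W' h, ← LinearMap.id_comp (LinearMap.id : A →ₗ[R] A),
    TensorProduct.map_comp]
  exact range_comp_le_range _ _

open LinearMap in
theorem TensorProduct.range_smul_id_le_range_map_subtype {A V : Type} [AddCommGroup A]
    [Module R A] [AddCommGroup V] [Module R V] {r : R} {W : Submodule R V}
    (h : ∀ x : V, r • x ∈ W) :
    range (r • (LinearMap.id : V ⊗[R] A →ₗ[R] V ⊗[R] A)) ≤
      range (map W.subtype (LinearMap.id : A →ₗ[R] A)) := by
  have : r • (LinearMap.id : V ⊗[R] A →ₗ[R] V ⊗[R] A) =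
      (map W.subtype LinearMap.id).comp (map ((r • LinearMap.id).codRestrict W h) LinearMap.id) := by
    rw [← TensorProduct.map_comp, ← TensorProduct.map_id, ← TensorProduct.map_smul_left]
    rfl
  rw [this]
  exact range_comp_le_range _ _

theorem IsSemiInvariantMod.isSubcomodule {A V : Type} [CommRing A] [Algebra R A]
    [AddCommGroup V] [Module R V] {π : R} {ρ : V →ₗ[R] V ⊗[R] A} {v : V} {n : ℕ}
    (hv : IsSemiInvariantMod π ρ v n) :
    IsSubcomodule ρ (Submodule.span R {v} ⊔
      LinearMap.range ((π ^ (n + 1)) • (LinearMap.id : V →ₗ[R] V))) := by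
  intro x hx
  refine SetLike.le_def.mp (sup_le (TensorProduct.range_map_subtype_mono le_sup_left)
    (TensorProduct.range_smul_id_le_range_map_subtype fun y => ?_)) (hv x hx)
  exact Submodule.mem_sup_right (LinearMap.mem_range_self _ y)

theorem Submodule.mem_of_forall_mem_sup_range_pow_smul [IsNoetherianRing R] [IsLocalRing R]
    {V : Type} [AddCommGroup V] [Module R V] [Module.Finite R V] {π : R} (hπ : ¬IsUnit π)
    {N : Submodule R V} {x : V}
    (hx : ∀ n : ℕ, x ∈ N ⊔ LinearMap.range ((π ^ (n + 1)) • (LinearMap.id : V →ₗ[R] V))) :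
    x ∈ N := by
  have hI : Ideal.span {π} ≠ ⊤ := mt Ideal.span_singleton_eq_top.mp hπ
  rw [← Submodule.Quotient.mk_eq_zero N, ← Submodule.mem_bot R,
    ← Ideal.iInf_pow_smul_eq_bot_of_isLocalRing (M := V ⧸ N) _ hI, Submodule.mem_iInf]
  intro n
  obtain ⟨s, hs, _, ⟨w, rfl⟩, rfl⟩ := Submodule.mem_sup.mp (hx n)
  rw [LinearMap.smul_apply, LinearMap.id_apply, Submodule.Quotient.mk_add,
    (Submodule.Quotient.mk_eq_zero N).mpr hs, zero_add, Submodule.Quotient.mk_smul]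
  exact Submodule.smul_mono_left (Ideal.pow_le_pow_right n.le_succ)
    (Submodule.smul_mem_smul (Ideal.pow_mem_pow (Ideal.mem_span_singleton_self π) _) trivial)

theorem stmt19_general [IsDomain R] [IsDiscreteValuationRing R]
    (π : R) (hπ : Irreducible π)
    {A V : Type} [CommRing A] [HopfAlgebra R A]
    [AddCommGroup V] [Module R V] [Module.Finite R V]
    (ρ : V →ₗ[R] V ⊗[R] A)
    (h : ∀ F : Finset V, ∃ W₀ : Submodule R V, IsSubcomodule ρ W₀ ∧ ↑F ⊆ (W₀ : Set V) ∧
      ∀ W : Submodule R V, IsSubcomodule ρ W → ↑F ⊆ (W : Set V) → W₀ ≤ W) :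
    ∀ v : V, (∀ n : ℕ, IsSemiInvariantMod π ρ v n) → IsSemiInvariant ρ v := by
  intro v hv
  obtain ⟨W₀, hW₀, hvW₀, hW₀_least⟩ := h {v}
  have hv_mem : v ∈ W₀ := hvW₀ (Finset.mem_coe.mpr (Finset.mem_singleton_self v))
  have hW₀_le : W₀ ≤ Submodule.span R {v} := fun x hx =>
    Submodule.mem_of_forall_mem_sup_range_pow_smul hπ.not_isUnit fun n =>
      hW₀_least _ (hv n).isSubcomodule
        (by simpa using Submodule.mem_sup_left (Submodule.mem_span_singleton_self v)) hx
  have hW₀_eq : W₀ = Submodule.span R {v} :=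
    le_antisymm hW₀_le (Submodule.span_le.mpr (Set.singleton_subset_iff.mpr hv_mem))
  exact (hW₀_eq ▸ hW₀ : IsSubcomodule ρ (Submodule.span R {v}))

/-- If in the representation `(V, ρ)` of the flat affine group scheme `G = Spec A`
over the complete DVR `R` every finite subset `F ⊆ V` is contained in a least
subrepresentation, then `V` is prudent: every `v ∈ V` whose reduction modulo
`π^(n+1) V` is semi-invariant for all `n` is semi-invariant. -/
theorem stmt19 [IsDomain R] [IsDiscreteValuationRing R]
    (π : R) (hπ : Irreducible π) [IsAdicComplete (Ideal.span {π}) R]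
    {A V : Type} [CommRing A] [HopfAlgebra R A] [Module.Flat R A]
    [AddCommGroup V] [Module R V] [Module.Finite R V] [Module.Free R V]
    (ρ : V →ₗ[R] V ⊗[R] A) (hρ : IsCoaction ρ)
    (h : ∀ F : Finset V, ∃ W₀ : Submodule R V, IsSubcomodule ρ W₀ ∧ ↑F ⊆ (W₀ : Set V) ∧
      ∀ W : Submodule R V, IsSubcomodule ρ W → ↑F ⊆ (W : Set V) → W₀ ≤ W) :
    ∀ v : V, (∀ n : ℕ, IsSemiInvariantMod π ρ v n) → IsSemiInvariant ρ v :=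
  stmt19_general π hπ ρ h
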